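/- Recall maximality of the optimal tree: for every valid configuration c = (z, σ, t) and every reachable tree t' ∈ D(c), r(t') ≤ r(t*(c)), i.e., |t' ∩ t_G| ≤ |t*(c) ∩ t_G|. (Part of the proof of Theorem 1.) -/

import Mathlib

/-!
Formalization of the span-based Structure/Label transition parsing system of
Cross & Huang (2016), "Span-Based Constituency Parsing with a Structure-Label
System and Provably Optimal Dynamic Oracles".

A configuration is `(z, σ, t)` where `z` is the step number, `σ` the stack of
span boundaries and `t` the set of brackets built so far.  A bracket is a
triple `(X, i, j)` with `X` a nonterminal label and `i < j ≤ n` a span.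
-/

namespace SpanParser

structure Config (N : Type*) where
  z : ℕ
  σ : List ℕ
  t : Finset (N × ℕ × ℕ)

variable {N : Type*}

/-- The span of a bracket. -/
def span (b : N × ℕ × ℕ) : ℕ × ℕ := b.2

/-- Top (rightmost) boundary of the stack. -/
def topJ (σ : List ℕ) : ℕ := σ.getLastD 0

/-- Second-to-top boundary of the stack. -/
def topI (σ : List ℕ) : ℕ := σ.dropLast.getLastD 0

/-- Parser actions: shift, combine, label-`X`, and nolabel. -/
inductive Action (N : Type*) where
  | sh : Action N
  | comb : Action N
  | label : N → Action N
  | nolabel : Action N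

variable [DecidableEq N]

/-- Applicability of an action at a configuration (for sentence length `n`). -/
def App (n : ℕ) (c : Config N) : Action N → Prop
  | .sh      => Even c.z ∧ c.σ ≠ [] ∧ topJ c.σ < n
  | .comb    => Even c.z ∧ 3 ≤ c.σ.length
  | .label _ => Odd c.z ∧ 2 ≤ c.σ.length
  | .nolabel => Odd c.z ∧ 2 ≤ c.σ.length ∧ c.z < 4 * n - 1

/-- The result `τ(c)` of applying action `τ` to configuration `c`. -/
def doAct (c : Config N) : Action N → Config N
  | .sh      => ⟨c.z + 1, c.σ ++ [topJ c.σ + 1], c.t⟩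
  | .comb    => ⟨c.z + 1, c.σ.dropLast.dropLast ++ [topJ c.σ], c.t⟩
  | .label X => ⟨c.z + 1, c.σ, insert (X, topI c.σ, topJ c.σ) c.t⟩
  | .nolabel => ⟨c.z + 1, c.σ, c.t⟩

/-- The initial configuration `(0, [0], ∅)`. -/
def initial (N : Type*) : Config N := ⟨0, [0], ∅⟩

/-- One transition step `c ⊢ c'`. -/
def Step (n : ℕ) (c c' : Config N) : Prop := ∃ a, App n c a ∧ c' = doAct c a

/-- `⊢*`: reflexive-transitive closure of the transition relation. -/
def Reaches (n : ℕ) : Config N → Config N → Prop := Relation.ReflTransGen (Step n)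

/-- A configuration is valid if it is reachable from the initial configuration. -/
def Valid (n : ℕ) (c : Config N) : Prop := Reaches n (initial N) c

/-- A final configuration: `σ = [0, n]` and `z = 4n - 2`. -/
def Final (n : ℕ) (c : Config N) : Prop := c.σ = [0, n] ∧ c.z = 4 * n - 2

/-- `D(c)`: the set of trees of final configurations reachable from `c`. -/
def Dset (n : ℕ) (c : Config N) : Set (Finset (N × ℕ × ℕ)) :=
  {t' | ∃ c', Reaches n c c' ∧ Final n c' ∧ c'.t = t'}

/-- `(i,j) ⪯ (p,q)`: span `(i,j)` is encompassed by `(p,q)`, i.e. `p ≤ i < j ≤ q`. -/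
def Enc (s₁ s₂ : ℕ × ℕ) : Prop := s₂.1 ≤ s₁.1 ∧ s₁.1 < s₁.2 ∧ s₁.2 ≤ s₂.2

/-- `(i,j) ≺ (p,q)`: strict encompassment. -/
def SEnc (s₁ s₂ : ℕ × ℕ) : Prop := Enc s₁ s₂ ∧ s₁ ≠ s₂

/-- `tG` is a gold tree for sentence length `n`: valid spans, pairwise-distinct
spans, pairwise non-crossing spans, and exactly one bracket with span `(0, n)`
(uniqueness follows from distinctness of spans). -/
structure IsGold (n : ℕ) (tG : Finset (N × ℕ × ℕ)) : Prop where
  validSpans : ∀ b ∈ tG, (span b).1 < (span b).2 ∧ (span b).2 ≤ n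
  distinctSpans : ∀ b₁ ∈ tG, ∀ b₂ ∈ tG, span b₁ = span b₂ → b₁ = b₂
  noncrossing : ∀ b₁ ∈ tG, ∀ b₂ ∈ tG,
    Enc (span b₁) (span b₂) ∨ Enc (span b₂) (span b₁) ∨
    (span b₁).2 ≤ (span b₂).1 ∨ (span b₂).2 ≤ (span b₁).1
  root : ∃ X, (X, 0, n) ∈ tG

open Classical in
/-- `left(c)`: gold brackets (strictly, at even steps) encompassing the top
span whose left boundary occurs on the stack. -/
noncomputable def leftSet (tG : Finset (N × ℕ × ℕ)) (c : Config N) :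
    Finset (N × ℕ × ℕ) :=
  tG.filter fun b =>
    (if Even c.z then SEnc (topI c.σ, topJ c.σ) (span b)
     else Enc (topI c.σ, topJ c.σ) (span b)) ∧ (span b).1 ∈ c.σ

open Classical in
/-- `right(c)`: gold brackets entirely on the queue. -/
noncomputable def rightSet (tG : Finset (N × ℕ × ℕ)) (c : Config N) :
    Finset (N × ℕ × ℕ) :=
  tG.filter fun b => topJ c.σ ≤ (span b).1

open Classical in
/-- `reach(c)`: the reachable gold brackets (all of `t_G` at the initial
configuration, whose stack has fewer than two boundaries). -/
noncomputable def reach (tG : Finset (N × ℕ × ℕ)) (c : Config N) :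
    Finset (N × ℕ × ℕ) :=
  if c.σ.length < 2 then tG else leftSet tG c ∪ rightSet tG c

/-- The optimal tree `t*(c) = t ∪ reach(c)`. -/
noncomputable def tstar (tG : Finset (N × ℕ × ℕ)) (c : Config N) :
    Finset (N × ℕ × ℕ) :=
  c.t ∪ reach tG c

/-- `b = next(c)`: the `≺`-minimal element of `left(c)`. -/
def IsNext (tG : Finset (N × ℕ × ℕ)) (c : Config N) (b : N × ℕ × ℕ) : Prop :=
  b ∈ leftSet tG c ∧ ∀ b' ∈ leftSet tG c, Enc (span b) (span b')

/-- The dynamic-oracle policy `dyna(c)` as a predicate on actions. -/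
def Dyna (tG : Finset (N × ℕ × ℕ)) (c : Config N) (a : Action N) : Prop :=
  if c.σ.length < 2 then a = Action.sh
  else if Even c.z then
    ∃ b, IsNext tG c b ∧
      (((span b).1 = topI c.σ ∧ topJ c.σ < (span b).2 ∧ a = Action.sh) ∨
       ((span b).1 < topI c.σ ∧ (span b).2 = topJ c.σ ∧ a = Action.comb) ∨
       ((span b).1 < topI c.σ ∧ topJ c.σ < (span b).2 ∧
          (a = Action.sh ∨ a = Action.comb)))
  else
    (∃ X, (X, topI c.σ, topJ c.σ) ∈ tG ∧ a = Action.label X) ∨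
    ((∀ X, (X, topI c.σ, topJ c.σ) ∉ tG) ∧ a = Action.nolabel)

/-- `F1` of a predicted bracket set `t'` against the gold tree `tG`
(`0` when `t' ∩ tG = ∅`). -/
noncomputable def f1 (tG t' : Finset (N × ℕ × ℕ)) : ℝ :=
  if t' ∩ tG = ∅ then 0
  else
    (2 * (((t' ∩ tG).card : ℝ) / (tG.card : ℝ)) * (((t' ∩ tG).card : ℝ) / (t'.card : ℝ))) /
      ((((t' ∩ tG).card : ℝ) / (tG.card : ℝ)) + (((t' ∩ tG).card : ℝ) / (t'.card : ℝ)))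

/-- `F1(c)`: the best `F1` among trees reachable from `c`. -/
noncomputable def configF1 (n : ℕ) (tG : Finset (N × ℕ × ℕ)) (c : Config N) : ℝ :=
  sSup (f1 tG '' Dset n c)

/-- A run of (applicable) actions from one configuration to another. -/
inductive Run (n : ℕ) : Config N → List (Action N) → Config N → Prop
  | refl (c : Config N) : Run n c [] c
  | step {c c' : Config N} {as : List (Action N)} (a : Action N)
      (happ : App n c a) (h : Run n (doAct c a) as c') : Run n c (a :: as) c'

/-- A run all of whose actions follow the dynamic oracle. -/
inductive DynaRun (n : ℕ) (tG : Finset (N × ℕ × ℕ)) : Config N → Config N → Prop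
  | refl (c : Config N) : DynaRun n tG c c
  | step {c c' : Config N} (a : Action N) (happ : App n c a) (hdyna : Dyna tG c a)
      (h : DynaRun n tG (doAct c a) c') : DynaRun n tG c c'

def isSh : Action N → Bool
  | .sh => true
  | _ => false

def isComb : Action N → Bool
  | .comb => true
  | _ => false

/-- Label-step actions: `label-X` or `nolabel`. -/
def isLabelStep : Action N → Bool
  | .label _ => true
  | .nolabel => true
  | _ => false

/-!
For the strictly increasing stacks of valid configurations, every transition `c ⊢ c'` satisfies
`t*(c') ∩ t_G ⊆ t*(c) ∩ t_G`. Shift and combine only shrink `reach`: a gold span covering the new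
top span either lies on the queue or already strictly covered the old top span. Label and nolabel
steps pass from `⪯` to `≺`, and a gold bracket added by `label-X` was already in `left(c)`. As the
tree of every configuration lies in its optimal tree, `t' ∩ t_G ⊆ t*(c) ∩ t_G` for `t' ∈ D(c)`.
-/

@[simp] lemma topJ_append_singleton (σ : List ℕ) (a : ℕ) : topJ (σ ++ [a]) = a := by
  simp [topJ]

@[simp] lemma topI_append_singleton (σ : List ℕ) (a : ℕ) : topI (σ ++ [a]) = topJ σ := by
  simp [topI, topJ]

@[simp] lemma topJ_append_pair (σ : List ℕ) (i j : ℕ) : topJ (σ ++ [i, j]) = j := by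
  simpa using topJ_append_singleton (σ ++ [i]) j

@[simp] lemma topI_append_pair (σ : List ℕ) (i j : ℕ) : topI (σ ++ [i, j]) = i := by
  simpa using topI_append_singleton (σ ++ [i]) j

lemma exists_eq_append_pair {σ : List ℕ} (h : 2 ≤ σ.length) : ∃ A i j, σ = A ++ [i, j] := by
  obtain rfl | ⟨B, j, rfl⟩ := σ.eq_nil_or_concat'
  · simp at h
  obtain rfl | ⟨A, i, rfl⟩ := B.eq_nil_or_concat'
  · simp at h
  exact ⟨A, i, j, by simp⟩

@[simp] lemma dropLast_dropLast_append_pair (σ : List ℕ) (i j : ℕ) :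
    (σ ++ [i, j]).dropLast.dropLast = σ := by
  simp

lemma le_topJ_of_pairwise {σ : List ℕ} (hσ : σ.Pairwise (· < ·)) {x : ℕ} (hx : x ∈ σ) :
    x ≤ topJ σ := by
  obtain rfl | ⟨A, a, rfl⟩ := σ.eq_nil_or_concat'
  · simp at hx
  · simp only [List.pairwise_append, List.mem_append, List.mem_singleton] at hσ hx
    rcases hx with hx | rfl
    · simpa using (hσ.2.2 x hx a rfl).le
    · simp

lemma pairwise_doAct {c : Config N} (hσ : c.σ.Pairwise (· < ·)) (a : Action N) :
    (doAct c a).σ.Pairwise (· < ·) := by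
  cases a with
  | sh =>
    refine List.pairwise_append.2 ⟨hσ, by simp, ?_⟩
    simpa [Nat.lt_succ_iff] using fun x hx => le_topJ_of_pairwise hσ hx
  | comb =>
    obtain ⟨z, σ, t⟩ := c
    obtain rfl | ⟨A, j, rfl⟩ := σ.eq_nil_or_concat'
    · simp [doAct]
    · simp only [doAct, List.dropLast_concat, topJ_append_singleton]
      exact hσ.sublist ((List.dropLast_sublist A).append_right [j])
  | label X => exact hσ
  | nolabel => exact hσ

lemma Reaches.pairwise_stack {n : ℕ} {c c' : Config N} (h : Reaches n c c')
    (hσ : c.σ.Pairwise (· < ·)) : c'.σ.Pairwise (· < ·) := by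
  induction h with
  | refl => exact hσ
  | tail _ hstep ih =>
    obtain ⟨a, -, rfl⟩ := hstep
    exact pairwise_doAct ih a

lemma Valid.pairwise_stack {n : ℕ} {c : Config N} (h : Valid n c) : c.σ.Pairwise (· < ·) :=
  Reaches.pairwise_stack h (by simp [initial])

lemma reach_subset (tG : Finset (N × ℕ × ℕ)) (c : Config N) : reach tG c ⊆ tG := by
  classical
  unfold reach
  split_ifs
  · exact subset_rfl
  · exact Finset.union_subset (fun _ hb => (Finset.mem_filter.1 hb).1)
      (fun _ hb => (Finset.mem_filter.1 hb).1)

lemma mem_reach_of_even {tG : Finset (N × ℕ × ℕ)} {z : ℕ} {σ : List ℕ}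
    {t : Finset (N × ℕ × ℕ)} {b : N × ℕ × ℕ} (hz : Even z) (h2 : 2 ≤ σ.length) :
    b ∈ reach tG ⟨z, σ, t⟩ ↔ b ∈ tG ∧
      (SEnc (topI σ, topJ σ) (span b) ∧ (span b).1 ∈ σ ∨ topJ σ ≤ (span b).1) := by
  simp [reach, leftSet, rightSet, hz, h2.not_gt, and_or_left]

lemma mem_reach_of_odd {tG : Finset (N × ℕ × ℕ)} {z : ℕ} {σ : List ℕ}
    {t : Finset (N × ℕ × ℕ)} {b : N × ℕ × ℕ} (hz : Odd z) (h2 : 2 ≤ σ.length) :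
    b ∈ reach tG ⟨z, σ, t⟩ ↔ b ∈ tG ∧
      (Enc (topI σ, topJ σ) (span b) ∧ (span b).1 ∈ σ ∨ topJ σ ≤ (span b).1) := by
  simp [reach, leftSet, rightSet, Nat.not_even_iff_odd.2 hz, h2.not_gt, and_or_left]

lemma reach_doAct_sh_subset {tG : Finset (N × ℕ × ℕ)} {c : Config N} (hz : Even c.z)
    (hσ : c.σ.Pairwise (· < ·)) : reach tG (doAct c .sh) ⊆ reach tG c := by
  obtain ⟨z, σ, t⟩ := c
  rcases lt_or_ge σ.length 2 with h2 | h2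
  · simpa [reach, h2] using reach_subset tG (doAct ⟨z, σ, t⟩ .sh)
  obtain ⟨A, i, j, rfl⟩ := exists_eq_append_pair h2
  simp only [List.pairwise_append] at hσ
  rintro ⟨X, p, q⟩ hb
  rw [doAct, mem_reach_of_odd hz.add_one (by simp)] at hb
  simp only [topI_append_singleton, topJ_append_singleton, topJ_append_pair] at hb
  rw [mem_reach_of_even hz h2]
  simp [span, SEnc, Enc] at hb hσ ⊢
  -- a gold span covering `(j, j + 1)` that starts on the stack below `j` starts at or before `i`
  grind

lemma reach_doAct_comb_subset {tG : Finset (N × ℕ × ℕ)} {c : Config N} (hz : Even c.z)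
    (h3 : 3 ≤ c.σ.length) (hσ : c.σ.Pairwise (· < ·)) :
    reach tG (doAct c .comb) ⊆ reach tG c := by
  obtain ⟨z, σ, t⟩ := c
  dsimp only at hz h3 hσ
  obtain ⟨B, i, j, rfl⟩ := exists_eq_append_pair (by omega : 2 ≤ σ.length)
  obtain rfl | ⟨A, k, rfl⟩ := B.eq_nil_or_concat'
  · simp at h3
  simp only [List.pairwise_append] at hσ
  rintro ⟨X, p, q⟩ hb
  rw [doAct, mem_reach_of_odd hz.add_one (by simp)] at hb
  simp only [dropLast_dropLast_append_pair, topJ_append_pair, topI_append_singleton,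
    topJ_append_singleton] at hb
  rw [mem_reach_of_even hz (by simp)]
  simp only [topI_append_pair, topJ_append_pair]
  simp [span, SEnc, Enc] at hb hσ ⊢
  -- a span covering the new top span `(k, j)` starts at or before `k < i`
  grind

lemma reach_succ_subset_of_odd {tG : Finset (N × ℕ × ℕ)} {z : ℕ} {σ : List ℕ}
    {t t' : Finset (N × ℕ × ℕ)} (hz : Odd z) :
    reach tG ⟨z + 1, σ, t'⟩ ⊆ reach tG ⟨z, σ, t⟩ := by
  rcases lt_or_ge σ.length 2 with h2 | h2
  · simp [reach, h2]
  intro b hb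
  rw [mem_reach_of_even hz.add_one h2] at hb
  rw [mem_reach_of_odd hz h2]
  exact hb.imp_right (Or.imp_left (And.imp_left fun h => h.1))

lemma top_mem_reach_of_odd {tG : Finset (N × ℕ × ℕ)} {z : ℕ} {σ : List ℕ}
    {t : Finset (N × ℕ × ℕ)} {X : N} (hz : Odd z) (h2 : 2 ≤ σ.length)
    (hσ : σ.Pairwise (· < ·)) (hX : (X, topI σ, topJ σ) ∈ tG) :
    (X, topI σ, topJ σ) ∈ reach tG ⟨z, σ, t⟩ := by
  obtain ⟨A, i, j, rfl⟩ := exists_eq_append_pair h2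
  rw [mem_reach_of_odd hz h2]
  simp only [List.pairwise_append] at hσ
  simp_all [span, Enc]

lemma tstar_doAct_inter_subset {n : ℕ} {tG : Finset (N × ℕ × ℕ)} {c : Config N}
    {a : Action N} (hσ : c.σ.Pairwise (· < ·)) (ha : App n c a) :
    tstar tG (doAct c a) ∩ tG ⊆ tstar tG c ∩ tG := by
  cases a with
  | sh =>
    exact Finset.inter_subset_inter_right
      (Finset.union_subset_union subset_rfl (reach_doAct_sh_subset ha.1 hσ))
  | comb =>
    exact Finset.inter_subset_inter_right
      (Finset.union_subset_union subset_rfl (reach_doAct_comb_subset ha.1 ha.2 hσ))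
  | label X =>
    intro b hb
    obtain ⟨hb, hbG⟩ := Finset.mem_inter.1 hb
    refine Finset.mem_inter.2 ⟨?_, hbG⟩
    rcases Finset.mem_union.1 hb with hb | hb
    · rcases Finset.mem_insert.1 hb with rfl | hb
      · exact Finset.mem_union_right _ (top_mem_reach_of_odd ha.1 ha.2 hσ hbG)
      · exact Finset.mem_union_left _ hb
    · exact Finset.mem_union_right _ (reach_succ_subset_of_odd ha.1 hb)
  | nolabel =>
    exact Finset.inter_subset_inter_right
      (Finset.union_subset_union subset_rfl (reach_succ_subset_of_odd ha.1))

lemma tstar_inter_subset_of_reaches {n : ℕ} {tG : Finset (N × ℕ × ℕ)} {c c' : Config N}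
    (h : Reaches n c c') (hσ : c.σ.Pairwise (· < ·)) :
    tstar tG c' ∩ tG ⊆ tstar tG c ∩ tG := by
  induction h using Relation.ReflTransGen.head_induction_on with
  | refl => exact subset_rfl
  | head hstep _ ih =>
    obtain ⟨a, ha, rfl⟩ := hstep
    exact (ih (pairwise_doAct hσ a)).trans (tstar_doAct_inter_subset hσ ha)

theorem recall_maximal_general (n : ℕ) (tG : Finset (N × ℕ × ℕ))
    (c : Config N) (hc : Valid n c)
    (t' : Finset (N × ℕ × ℕ)) (ht' : t' ∈ Dset n c) :
    (t' ∩ tG).card ≤ (tstar tG c ∩ tG).card ∧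
      ((t' ∩ tG).card : ℝ) / (tG.card : ℝ) ≤
        ((tstar tG c ∩ tG).card : ℝ) / (tG.card : ℝ) := by
  obtain ⟨c', hreach, -, rfl⟩ := ht'
  have hsub : c'.t ∩ tG ⊆ tstar tG c ∩ tG :=
    (Finset.inter_subset_inter_right Finset.subset_union_left).trans
      (tstar_inter_subset_of_reaches hreach hc.pairwise_stack)
  have hcard := Finset.card_le_card hsub
  exact ⟨hcard, div_le_div_of_nonneg_right (by exact_mod_cast hcard) (Nat.cast_nonneg _)⟩

/-- Recall maximality of the optimal tree: for every valid `c` and every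
`t' ∈ D(c)`, `r(t') ≤ r(t*(c))`, i.e. `|t' ∩ t_G| ≤ |t*(c) ∩ t_G|`. -/
theorem recall_maximal (n : ℕ) (hn : 1 ≤ n) (tG : Finset (N × ℕ × ℕ))
    (hG : IsGold n tG) (c : Config N) (hc : Valid n c)
    (t' : Finset (N × ℕ × ℕ)) (ht' : t' ∈ Dset n c) :
    (t' ∩ tG).card ≤ (tstar tG c ∩ tG).card ∧
      ((t' ∩ tG).card : ℝ) / (tG.card : ℝ) ≤
        ((tstar tG c ∩ tG).card : ℝ) / (tG.card : ℝ) :=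
  recall_maximal_general n tG c hc t' ht'

end SpanParser
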